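/- Let G be a cofinitary group, T ∈ I_i(G)^+, t ∈ T, and (s,E) a condition of Zhang's forcing Z_G. Then there exist a condition (s',E) of Z_G with (s',E) ≤ (s,E), an element t' ∈ T with t ⊆ t', and k ∈ dom(t') \ dom(t) such that t'(k) = s'(k). -/

import Mathlib

noncomputable section

/-- Permutations of the natural numbers (elements of `S_∞`). -/
abbrev Perm' := Equiv.Perm ℕ

/-- A letter of a word over `G ∪ {x, x⁻¹}`: either a group element (of `S_∞`),
or `Sum.inr true` standing for `x`, or `Sum.inr false` standing for `x⁻¹`. -/
abbrev Letter := Perm' ⊕ Bool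

/-- A word is a list of letters, written left to right
(the leftmost letter is applied last). -/
abbrev Word := List Letter

/-- A subgroup of `S_∞` is cofinitary if every non-identity element
has only finitely many fixed points. -/
def Cofinitary (G : Subgroup Perm') : Prop :=
  ∀ g ∈ G, g ≠ 1 → {n : ℕ | g n = n}.Finite

/-- A set of pairs is a partial injection (functional and injective). -/
def PartInj (s : Set (ℕ × ℕ)) : Prop :=
  (∀ ⦃a b c⦄, (a, b) ∈ s → (a, c) ∈ s → b = c) ∧
  (∀ ⦃a b c⦄, (a, c) ∈ s → (b, c) ∈ s → a = b)

/-- Domain of a partial injection given as a set of pairs. -/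
def pdom (s : Set (ℕ × ℕ)) : Set ℕ := Prod.fst '' s

/-- Range of a partial injection given as a set of pairs. -/
def pran (s : Set (ℕ × ℕ)) : Set ℕ := Prod.snd '' s

/-- The relation given by substituting the partial injection `s` for `x`
(and `s⁻¹` for `x⁻¹`) in a single letter. -/
def letterRel (s : Set (ℕ × ℕ)) : Letter → ℕ → ℕ → Prop
  | Sum.inl g => fun a b => g a = b
  | Sum.inr true => fun a b => (a, b) ∈ s
  | Sum.inr false => fun a b => (b, a) ∈ s

/-- The relation `w[s]`: evaluation of a word at the partial injection `s`,
composing the letter relations (rightmost letter applied first). -/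
def wordRel (s : Set (ℕ × ℕ)) : Word → ℕ → ℕ → Prop
  | [] => fun a b => a = b
  | l :: w => fun a b => ∃ c, wordRel s w a c ∧ letterRel s l c b

/-- `fix(w[s])`, the set of fixed points of the partial injection `w[s]`. -/
def wordFix (s : Set (ℕ × ℕ)) (w : Word) : Set ℕ := {n | wordRel s w n n}

/-- The word `x^k` for an integer `k` (for `k < 0`, `|k|` copies of `x⁻¹`). -/
def xpow (k : ℤ) : Word :=
  if 0 ≤ k then List.replicate k.toNat (Sum.inr true : Letter)
  else List.replicate (-k).toNat (Sum.inr false : Letter)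

/-- The block `g x^k` as a word. -/
def blockWord (p : Perm' × ℤ) : Word := Sum.inl p.1 :: xpow p.2

/-- `w` is a nice word (member of `W*_G`): `w = x^{k₀}` with `k₀ > 0`, or
`w = g_l x^{k_l} ⋯ g₁ x^{k₁} g₀ x^{k₀}` with `k₀ > 0`, all `k_i ≠ 0` and all
`g_i ∈ G \ {id}`. -/
def IsNice (G : Subgroup Perm') (w : Word) : Prop :=
  (∃ k : ℕ, 0 < k ∧ w = xpow (k : ℤ)) ∨
  (∃ bs : List (Perm' × ℤ), bs ≠ [] ∧
    (∀ p ∈ bs, p.1 ∈ G ∧ p.1 ≠ 1 ∧ p.2 ≠ 0) ∧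
    (∃ p, bs.getLast? = some p ∧ 0 < p.2) ∧
    w = (bs.map blockWord).flatten)

/-- The number of occurrences of `x` or `x⁻¹` in a word. -/
def xOccurrences (w : Word) : ℕ := w.countP (fun l => l.isRight)

/-- `w ∈ W¹_G`: a nice word with exactly one occurrence of `x` or `x⁻¹`. -/
def IsNiceOne (G : Subgroup Perm') (w : Word) : Prop :=
  IsNice G w ∧ xOccurrences w = 1

/-- `(s, E)` is a condition of Zhang's forcing `Z_G`: `s` is a finite partial
injection and `E` a finite set of nice words. -/
def ZCond (G : Subgroup Perm') (s : Set (ℕ × ℕ)) (E : Set Word) : Prop :=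
  s.Finite ∧ PartInj s ∧ E.Finite ∧ ∀ w ∈ E, IsNice G w

/-- `(t, F) ≤ (s, E)` in Zhang's forcing: `s ⊆ t`, `E ⊆ F`, and
`fix(w[t]) = fix(w[s])` for every `w ∈ E`. -/
def ZLe (t : Set (ℕ × ℕ)) (F : Set Word) (s : Set (ℕ × ℕ)) (E : Set Word) : Prop :=
  s ⊆ t ∧ E ⊆ F ∧ ∀ w ∈ E, wordFix t w = wordFix s w

/-- An injective tree: a nonempty set of finite sequences closed under initial
segments, all of whose elements are injective sequences. -/
def IsInjTree (T : Set (List ℕ)) : Prop :=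
  T.Nonempty ∧ (∀ t ∈ T, ∀ s : List ℕ, s <+: t → s ∈ T) ∧ ∀ t ∈ T, t.Nodup

/-- `T ∈ I_i(P)⁺`: an injective tree such that for every `s ∈ T` and every
finite `P₀ ⊆ P` there are `t ∈ T` extending `s` and `k ∈ dom(t) \ dom(s)` with
`t(k) ≠ f(k)` for all `f ∈ P₀`. -/
def TreePos (P : Set Perm') (T : Set (List ℕ)) : Prop :=
  IsInjTree T ∧
  ∀ s ∈ T, ∀ P₀ ⊆ P, P₀.Finite →
    ∃ t ∈ T, s <+: t ∧ ∃ k, s.length ≤ k ∧ k < t.length ∧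
      ∀ f ∈ P₀, t.getD k 0 ≠ f k

/-- A set `O` is closed under a relation `R` and its inverse. -/
def RelClosed (R : ℕ → ℕ → Prop) (O : Set ℕ) : Prop :=
  ∀ a b, R a b → (a ∈ O ↔ b ∈ O)

/-- The orbit of `n` under the (partial injective) relation `R`: the smallest
set containing `n` closed under applications of `R` and `R⁻¹`. -/
def relOrbit (R : ℕ → ℕ → Prop) (n : ℕ) : Set ℕ :=
  ⋂₀ {O : Set ℕ | n ∈ O ∧ RelClosed R O}

/-- The set of all orbits of the relation `R`. -/
def relOrbits (R : ℕ → ℕ → Prop) : Set (Set ℕ) := {O | ∃ n, O = relOrbit R n}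

/-- Domain of a relation. -/
def relDom (R : ℕ → ℕ → Prop) : Set ℕ := {a | ∃ b, R a b}

/-- Range of a relation. -/
def relRan (R : ℕ → ℕ → Prop) : Set ℕ := {b | ∃ a, R a b}

/-- The set of closed orbits of `R`: those orbits contained in `dom ∩ ran`. -/
def relClosedOrbits (R : ℕ → ℕ → Prop) : Set (Set ℕ) :=
  {O ∈ relOrbits R | O ⊆ relDom R ∩ relRan R}

/-- The relation of a partial injection given as a set of pairs. -/
def sRel (s : Set (ℕ × ℕ)) : ℕ → ℕ → Prop := fun a b => (a, b) ∈ s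

/-- The relation (graph) of a permutation of `ℕ`. -/
def permRel (f : Perm') : ℕ → ℕ → Prop := fun a b => f a = b

/-- A partial injection `s` is nice: every closed orbit has its minimum below
the minimum of the complement of the union of all closed orbits. -/
def NiceInj (s : Set (ℕ × ℕ)) : Prop :=
  ∀ O ∈ relClosedOrbits (sRel s),
    sInf O < sInf {n : ℕ | n ∉ ⋃₀ relClosedOrbits (sRel s)}

/-- The position of a closed orbit `O` of `s` in the well-order of closed
orbits by their minima. -/
def orbitIndex (s : Set (ℕ × ℕ)) (O : Set ℕ) : ℕ :=
  {P ∈ relClosedOrbits (sRel s) | sInf P < sInf O}.ncard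

/-- `s` codes `r`, i.e. `o_s ⊆ r`: the `n`-th closed orbit (in the well-order
by minima) has cardinality congruent to `r(n)` mod 2. -/
def CodesReal (s : Set (ℕ × ℕ)) (r : ℕ → Fin 2) : Prop :=
  ∀ O ∈ relClosedOrbits (sRel s), O.ncard % 2 = (r (orbitIndex s O) : ℕ)

/-- `(s, E)` is a condition of `Z_G(r)`. -/
def ZrCond (G : Subgroup Perm') (r : ℕ → Fin 2)
    (s : Set (ℕ × ℕ)) (E : Set Word) : Prop :=
  ZCond G s E ∧ NiceInj s ∧ CodesReal s r

/-- The `n`-th prime. -/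
def pPrime (n : ℕ) : ℕ := Nat.nth Nat.Prime n

/-- The orbit-coding function `o†`: `o†(n)` is the number of closed orbits of
`R` of cardinality `p_n`, modulo 2. -/
def odag (R : ℕ → ℕ → Prop) (n : ℕ) : ℕ :=
  {O ∈ relClosedOrbits R | O.ncard = pPrime n}.ncard % 2

/-- `v^k`: the word `v` concatenated `k` times. -/
def wpow (v : Word) (k : ℕ) : Word := (List.replicate k v).flatten

/-- `w ∈ W†_G`: a nice word that is indecomposable, i.e. not of the form `v^k`
for a nice word `v` and `k > 1`. -/
def Indecomposable (G : Subgroup Perm') (w : Word) : Prop :=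
  IsNice G w ∧ ¬∃ v : Word, IsNice G v ∧ ∃ k : ℕ, 1 < k ∧ w = wpow v k

/-- The inverse of a letter. -/
def letterInv : Letter → Letter
  | Sum.inl g => Sum.inl g⁻¹
  | Sum.inr b => Sum.inr (!b)

/-- The inverse of a word. -/
def wordInv (w : Word) : Word := (w.map letterInv).reverse

/-- `E` is closed under cyclic permutations and inverses thereof within `W*_G`. -/
def CyclClosed (G : Subgroup Perm') (E : Set Word) : Prop :=
  ∀ w ∈ E, ∀ w₀ w₁ : Word, w = w₀ ++ w₁ →
    (IsNice G (w₁ ++ w₀) → w₁ ++ w₀ ∈ E) ∧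
    (IsNice G (wordInv (w₁ ++ w₀)) → wordInv (w₁ ++ w₀) ∈ E)

/-- `(s, E)` is a condition of `Z†_G(r)`: a Zhang condition such that `E` is
closed under cyclic permutations and inverses thereof in `W*_G`, and whenever
`w = v^k ∈ E` with `v ∈ W†_G` then `v^l ∈ E` for all `0 < l ≤ k` and `o†_{v[s]}`
codes `r` up to `n` for every `n` with `p_n ≤ k`. -/
def ZdagCond (G : Subgroup Perm') (r : ℕ → Fin 2)
    (s : Set (ℕ × ℕ)) (E : Set Word) : Prop :=
  ZCond G s E ∧ CyclClosed G E ∧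
  ∀ w ∈ E, ∀ v : Word, ∀ k : ℕ, Indecomposable G v → w = wpow v k →
    (∀ l : ℕ, 0 < l → l ≤ k → wpow v l ∈ E) ∧
    (∀ n : ℕ, pPrime n ≤ k → ∀ i ≤ n, odag (wordRel s v) i = (r i : ℕ))

/-- Substituting the permutation `f` for `x` in a letter. -/
def letterPerm (f : Perm') : Letter → Perm'
  | Sum.inl g => g
  | Sum.inr true => f
  | Sum.inr false => f⁻¹

/-- `w[f]`: evaluation of a word at the permutation `f`. -/
def wordPerm (f : Perm') (w : Word) : Perm' := (w.map (letterPerm f)).prod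

/-- Two functions are eventually different. -/
def EvDiff (f g : ℕ → ℕ) : Prop := {k : ℕ | f k = g k}.Finite

/-- A set of permutations is an eventually different family. -/
def EDFamily (P : Set Perm') : Prop :=
  ∀ f ∈ P, ∀ g ∈ P, f ≠ g → EvDiff f g

/-!
Let `L` be the finite set of group letters of the words in `E` and call a point fresh if it lies
outside `dom s ∪ ran s`, is moved by every `g ∈ L`, and is sent outside `dom s ∪ ran s` by
every `g ∈ L`; cofinitarity makes all but finitely many points fresh. Iterating the positivity
of `T` for `P₀ = {id} ∪ L ∪ L⁻¹` gives an extension `t'` of `t` and `2d + 1` new positions at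
which `t'` differs from every `f ∈ P₀`, `d` being the number of non-fresh points. Since `t'` is
injective, at one of these positions `k` both `k` and `m = t'(k)` are fresh, and we put
`s' = s ∪ {(k, m)}`.

A nice word `w ∈ E` gains no fixed point: follow a closed path of `w[s']` to its first use of
the new pair. Arriving at `m` by `x` (or at `k` by `x⁻¹`), reducedness and freshness let the path
make at most one more step, by some `g ∈ L`. So the path ends, and hence starts, at one of
`m, g m, k, g k`; but `w` ends in `x`, so it starts in `dom s` or at `k` with the new pair as its
first step, and freshness together with `m ≠ f k` for `f ∈ P₀` rules out every combination.
-/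

open Pointwise

def ReducedPair : Letter → Letter → Prop
  | Sum.inl _, Sum.inl _ => False
  | Sum.inr β, Sum.inr β' => β = β'
  | _, _ => True

def IsReducedWord (w : Word) : Prop := w.IsChain ReducedPair

lemma xpow_eq_replicate (k : ℤ) :
    xpow k = List.replicate k.natAbs (Sum.inr (decide (0 ≤ k)) : Letter) := by
  unfold xpow
  split_ifs with hk <;> simp [hk] <;> omega

lemma isReducedWord_blockWord (p : Perm' × ℤ) : IsReducedWord (blockWord p) := by
  rw [IsReducedWord, blockWord, xpow_eq_replicate, List.isChain_cons]
  refine ⟨fun y hy => ?_, List.isChain_replicate_of_rel _ rfl⟩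
  rw [List.eq_of_mem_replicate (List.mem_of_mem_head? hy)]
  trivial

lemma blockWord_eq_append {p : Perm' × ℤ} (hp : p.2 ≠ 0) :
    ∃ w', blockWord p = w' ++ [Sum.inr (decide (0 ≤ p.2))] := by
  obtain ⟨n, hn⟩ : ∃ n, p.2.natAbs = n + 1 := Nat.exists_eq_succ_of_ne_zero (by omega)
  rw [blockWord, xpow_eq_replicate, hn, List.replicate_succ', ← List.cons_append]
  exact ⟨_, rfl⟩

lemma IsNice.isReducedWord {G : Subgroup Perm'} {w : Word} (hw : IsNice G w) :
    IsReducedWord w := by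
  rcases hw with ⟨k, -, rfl⟩ | ⟨bs, -, hbs, -, rfl⟩
  · rw [IsReducedWord, xpow_eq_replicate]
    exact List.isChain_replicate_of_rel _ rfl
  rw [IsReducedWord, List.isChain_flatten (by simp [blockWord])]
  refine ⟨?_, ?_⟩
  · simp only [List.mem_map]
    rintro _ ⟨p, -, rfl⟩
    exact isReducedWord_blockWord p
  refine (List.isChain_map _).2 (List.pairwise_of_forall_mem_list fun p hp q _ => ?_).isChain
  obtain ⟨w', hw'⟩ := blockWord_eq_append (hbs p hp).2.2
  rw [hw']
  simp [blockWord, ReducedPair]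

lemma IsNice.exists_eq_append_x {G : Subgroup Perm'} {w : Word} (hw : IsNice G w) :
    ∃ w', w = w' ++ [Sum.inr true] := by
  rcases hw with ⟨k, hk, rfl⟩ | ⟨bs, -, hbs, ⟨p, hlast, hp⟩, rfl⟩
  · obtain ⟨n, rfl⟩ := Nat.exists_eq_succ_of_ne_zero hk.ne'
    refine ⟨List.replicate n (Sum.inr true), ?_⟩
    rw [xpow_eq_replicate, ← List.replicate_succ']
    simp
    omega
  obtain ⟨bs', rfl⟩ := List.getLast?_eq_some_iff.1 hlast
  obtain ⟨w', hw'⟩ := blockWord_eq_append hp.ne'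
  refine ⟨(bs'.map blockWord).flatten ++ w', ?_⟩
  simp [hw', hp.le]

lemma IsNice.mem_of_inl_mem {G : Subgroup Perm'} {w : Word} (hw : IsNice G w) {g : Perm'}
    (hg : Sum.inl g ∈ w) : g ∈ G ∧ g ≠ 1 := by
  rcases hw with ⟨k, -, rfl⟩ | ⟨bs, -, hbs, -, rfl⟩
  · simp [xpow_eq_replicate] at hg
  simp only [List.mem_flatten, List.mem_map] at hg
  obtain ⟨-, ⟨p, hp, rfl⟩, hg⟩ := hg
  simp only [blockWord, xpow_eq_replicate, List.mem_cons, Sum.inl.injEq, List.mem_replicate,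
    reduceCtorEq, and_false, or_false] at hg
  exact hg ▸ ⟨(hbs p hp).1, (hbs p hp).2.1⟩

lemma wordRel_mono {s s' : Set (ℕ × ℕ)} (hss : s ⊆ s') {a b : ℕ} :
    ∀ {w : Word}, wordRel s w a b → wordRel s' w a b
  | [], h => h
  | Sum.inl _ :: _, ⟨c, hc, hl⟩ => ⟨c, wordRel_mono hss hc, hl⟩
  | Sum.inr true :: _, ⟨c, hc, hl⟩ => ⟨c, wordRel_mono hss hc, hss hl⟩
  | Sum.inr false :: _, ⟨c, hc, hl⟩ => ⟨c, wordRel_mono hss hc, hss hl⟩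

lemma wordRel_append_singleton {s : Set (ℕ × ℕ)} {u : Word} {l : Letter} {a b : ℕ} :
    wordRel s (u ++ [l]) a b ↔ ∃ c, letterRel s l a c ∧ wordRel s u c b := by
  induction u generalizing b with
  | nil => simp [wordRel]
  | cons l' u ih =>
    simp only [List.cons_append, wordRel, ih]
    tauto

lemma mem_pdom_union_pran_of_letterRel {s : Set (ℕ × ℕ)} {β : Bool} {a c : ℕ}
    (h : letterRel s (Sum.inr β) a c) : a ∈ pdom s ∪ pran s := by
  cases β
  · exact Or.inr ⟨_, h, rfl⟩
  · exact Or.inl ⟨_, h, rfl⟩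

lemma letterRel_insert {s : Set (ℕ × ℕ)} {k m : ℕ} {l : Letter} {c d : ℕ} :
    letterRel (insert (k, m) s) l c d ↔ letterRel s l c d ∨
      (l = Sum.inr true ∧ c = k ∧ d = m) ∨ (l = Sum.inr false ∧ c = m ∧ d = k) := by
  rcases l with g | _ | _ <;> simp [letterRel, or_comm, and_comm]

lemma wordRel_first_new_step {s s' : Set (ℕ × ℕ)} {a b : ℕ} :
    ∀ {w : Word}, wordRel s' w a b → wordRel s w a b ∨
      ∃ u l v c d, w = u ++ l :: v ∧ wordRel s v a c ∧ letterRel s' l c d ∧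
        ¬letterRel s l c d ∧ wordRel s' u d b
  | [], h => Or.inl h
  | l :: w, ⟨c, hc, hl⟩ => by
    rcases wordRel_first_new_step hc with hc | ⟨u, l', v, c', d, rfl, hv, hnew, hold, hu⟩
    · by_cases hls : letterRel s l c b
      · exact Or.inl ⟨c, hc, hls⟩
      · exact Or.inr ⟨[], l, w, c, b, rfl, hc, hl, hls, rfl⟩
    · exact Or.inr ⟨l :: u, l', v, c', d, rfl, hv, hnew, hold, c, hu, hl⟩

lemma wordRel_of_dead_end {s : Set (ℕ × ℕ)} {u : Word} {β : Bool} {v b : ℕ}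
    (hu : IsReducedWord (u ++ [Sum.inr β]))
    (hv : ∀ c, ¬letterRel s (Sum.inr β) v c)
    (hg : ∀ g, Sum.inl g ∈ u → g v ∉ pdom s ∪ pran s)
    (h : wordRel s u v b) : b = v ∨ ∃ g, Sum.inl g ∈ u ∧ b = g v := by
  rcases u.eq_nil_or_concat' with rfl | ⟨u, l, rfl⟩
  · exact Or.inl h.symm
  obtain ⟨c, hl, hu'⟩ := wordRel_append_singleton.1 h
  rw [IsReducedWord, List.append_assoc, List.singleton_append, List.isChain_append_cons_cons]
    at hu
  rcases l with g | β'
  · obtain rfl : g v = c := hl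
    have hgu : Sum.inl g ∈ u ++ [Sum.inl g] := by simp
    rcases u.eq_nil_or_concat' with rfl | ⟨u, l', rfl⟩
    · exact Or.inr ⟨g, hgu, hu'.symm⟩
    obtain ⟨c', hl', -⟩ := wordRel_append_singleton.1 hu'
    rw [List.append_assoc, List.singleton_append, List.isChain_append_cons_cons] at hu
    rcases l' with g' | β''
    · exact hu.1.2.1.elim
    · exact (hg g hgu (mem_pdom_union_pran_of_letterRel hl')).elim
  · obtain rfl : β' = β := hu.2.1
    exact (hv c hl).elim

lemma eq_or_mem_pdom_of_wordRel {s : Set (ℕ × ℕ)} {u v w : Word} {l : Letter} {n c : ℕ}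
    (hw : u ++ l :: v = w ++ [Sum.inr true]) (hv : wordRel s v n c) :
    (v = [] ∧ l = Sum.inr true ∧ c = n) ∨ n ∈ pdom s := by
  rcases v.eq_nil_or_concat' with rfl | ⟨v, l', rfl⟩
  · exact Or.inl ⟨rfl, by simpa using congrArg List.getLast? hw, (hv : n = c).symm⟩
  obtain rfl : l' = Sum.inr true := by
    have hw' : (u ++ l :: v) ++ [l'] = w ++ [Sum.inr true] := by simpa using hw
    simpa using (List.append_inj' hw' rfl).2
  obtain ⟨c', hc', -⟩ := wordRel_append_singleton.1 hv
  exact Or.inr ⟨_, hc', rfl⟩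

def FreshFor (s : Set (ℕ × ℕ)) (L : Set Perm') (v : ℕ) : Prop :=
  v ∉ pdom s ∪ pran s ∧ ∀ g ∈ L, g v ≠ v ∧ g v ∉ pdom s ∪ pran s

lemma notMem_pdom_union_pran_insert {s : Set (ℕ × ℕ)} {k m v : ℕ} :
    v ∉ pdom (insert (k, m) s) ∪ pran (insert (k, m) s) ↔
      v ≠ k ∧ v ≠ m ∧ v ∉ pdom s ∪ pran s := by
  simp only [pdom, pran, Set.image_insert_eq, Set.mem_union, Set.mem_insert_iff]
  tauto

theorem wordFix_insert_eq {s : Set (ℕ × ℕ)} {L : Set Perm'} {w : Word} {k m : ℕ}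
    (hw : IsReducedWord w) (hx : ∃ w', w = w' ++ [Sum.inr true])
    (hL : ∀ g, Sum.inl g ∈ w → g ∈ L) (hk : FreshFor s L k) (hm : FreshFor s L m)
    (hkm : ∀ f ∈ insert 1 (L ∪ L⁻¹), m ≠ f k) :
    wordFix (insert (k, m) s) w = wordFix s w := by
  have hmk : m ≠ k := hkm 1 (by simp)
  have hgkm : ∀ g ∈ L, g k ≠ m := fun g hg => (hkm g (by simp [hg])).symm
  have hgmk : ∀ g ∈ L, g m ≠ k := fun g hg h => hkm g⁻¹ (by simp [hg]) (by simp [← h])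
  ext n
  refine ⟨fun hn => ?_, wordRel_mono (Set.subset_insert _ _)⟩
  rcases wordRel_first_new_step hn with hold | ⟨u, l, v, c, d, rfl, hv, hnew, hold, hu⟩
  · exact hold
  exfalso
  have hred : ∀ β, l = Sum.inr β → IsReducedWord (u ++ [Sum.inr β]) :=
    fun β h => hw.prefix ⟨v, by simp [h]⟩
  have hLu : ∀ g, Sum.inl g ∈ u → g ∈ L := fun g hg => hL g (by simp [hg])
  obtain ⟨w', hw'⟩ := hx
  have hstart := eq_or_mem_pdom_of_wordRel hw' hv
  rcases letterRel_insert.1 hnew with hs | ⟨rfl, hc, hd⟩ | ⟨rfl, hc, hd⟩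
  · exact hold hs
  · rw [hd] at hu
    have hdead : ∀ c, ¬letterRel (insert (k, m) s) (Sum.inr true) m c := fun c h => by
      rcases letterRel_insert.1 h with h | h | h
      exacts [hm.1 (mem_pdom_union_pran_of_letterRel h), hmk h.2.1, by simp at h]
    have hgm : ∀ g, Sum.inl g ∈ u → g m ∉ pdom (insert (k, m) s) ∪ pran (insert (k, m) s) :=
      fun g hg => notMem_pdom_union_pran_insert.2
        ⟨hgmk g (hLu g hg), (hm.2 g (hLu g hg)).1, (hm.2 g (hLu g hg)).2⟩
    rw [hc] at hstart
    rcases wordRel_of_dead_end (hred _ rfl) hdead hgm hu with hn | ⟨g, hg, hn⟩ <;>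
      rw [hn] at hstart
    · rcases hstart with ⟨-, -, h⟩ | h
      exacts [hmk h.symm, hm.1 (Or.inl h)]
    · rcases hstart with ⟨-, -, h⟩ | h
      exacts [hgmk g (hLu g hg) h.symm, (hm.2 g (hLu g hg)).2 (Or.inl h)]
  · rw [hd] at hu
    have hdead : ∀ c, ¬letterRel (insert (k, m) s) (Sum.inr false) k c := fun c h => by
      rcases letterRel_insert.1 h with h | h | h
      exacts [hk.1 (mem_pdom_union_pran_of_letterRel h), by simp at h, hmk h.2.1.symm]
    have hgk : ∀ g, Sum.inl g ∈ u → g k ∉ pdom (insert (k, m) s) ∪ pran (insert (k, m) s) :=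
      fun g hg => notMem_pdom_union_pran_insert.2
        ⟨(hk.2 g (hLu g hg)).1, hgkm g (hLu g hg), (hk.2 g (hLu g hg)).2⟩
    rcases wordRel_of_dead_end (hred _ rfl) hdead hgk hu with hn | ⟨g, hg, hn⟩ <;>
      rw [hn] at hstart
    · rcases hstart with ⟨-, h, -⟩ | h
      exacts [by simp at h, hk.1 (Or.inl h)]
    · rcases hstart with ⟨-, h, -⟩ | h
      exacts [by simp at h, (hk.2 g (hLu g hg)).2 (Or.inl h)]

lemma PartInj.insert {s : Set (ℕ × ℕ)} (hs : PartInj s) {k m : ℕ} (hk : k ∉ pdom s)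
    (hm : m ∉ pran s) : PartInj (insert (k, m) s) := by
  refine ⟨fun a b c hab hac => ?_, fun a b c hac hbc => ?_⟩
  · simp only [Set.mem_insert_iff, Prod.mk.injEq] at hab hac
    rcases hab with ⟨rfl, rfl⟩ | hab <;> rcases hac with ⟨h, rfl⟩ | hac
    · rfl
    · exact (hk ⟨_, hac, rfl⟩).elim
    · exact (hk ⟨_, h ▸ hab, rfl⟩).elim
    · exact hs.1 hab hac
  · simp only [Set.mem_insert_iff, Prod.mk.injEq] at hac hbc
    rcases hac with ⟨rfl, rfl⟩ | hac <;> rcases hbc with ⟨rfl, h⟩ | hbc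
    · rfl
    · exact (hm ⟨_, hbc, rfl⟩).elim
    · exact (hm ⟨_, h ▸ hac, rfl⟩).elim
    · exact hs.2 hac hbc

lemma finite_setOf_not_freshFor {s : Set (ℕ × ℕ)} {L : Set Perm'} (hs : s.Finite)
    (hL : L.Finite) (hfix : ∀ g ∈ L, {n | g n = n}.Finite) :
    {v | ¬FreshFor s L v}.Finite := by
  have hA : (pdom s ∪ pran s).Finite := (hs.image _).union (hs.image _)
  refine (hA.union (hL.biUnion fun g hg => (hfix g hg).union
    (hA.preimage g.injective.injOn))).subset fun v hv => ?_
  simp only [FreshFor, not_and_or, not_forall, not_not, Set.mem_ofPred_eq] at hv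
  simpa only [Set.mem_union, Set.mem_iUnion, Set.mem_ofPred_eq, Set.mem_preimage,
    exists_prop] using hv

lemma finite_setOf_inl_mem {E : Set Word} (hE : E.Finite) :
    {g : Perm' | ∃ w ∈ E, Sum.inl g ∈ w}.Finite := by
  refine (hE.biUnion fun w _ => w.finite_toSet.preimage Sum.inl_injective.injOn).subset ?_
  rintro g ⟨w, hw, hg⟩
  exact Set.mem_biUnion hw hg

lemma TreePos.exists_extension_avoiding {P : Set Perm'} {T : Set (List ℕ)} (hT : TreePos P T)
    {P₀ : Set Perm'} (hP₀ : P₀ ⊆ P) (hP₀fin : P₀.Finite) {t : List ℕ} (ht : t ∈ T) (N : ℕ) :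
    ∃ t' ∈ T, t <+: t' ∧ ∃ K : Finset ℕ, K.card = N ∧
      ∀ k ∈ K, t.length ≤ k ∧ k < t'.length ∧ ∀ f ∈ P₀, t'.getD k 0 ≠ f k := by
  induction N with
  | zero => exact ⟨t, ht, List.prefix_refl t, ∅, rfl, by simp⟩
  | succ N ih =>
    obtain ⟨t', ht', htt', K, hKcard, hK⟩ := ih
    obtain ⟨t'', ht'', ht't'', k, hk, hkt'', havoid⟩ := hT.2 t' ht' P₀ hP₀ hP₀fin
    have hkK : k ∉ K := fun h => (hK k h).2.1.not_ge hk
    refine ⟨t'', ht'', htt'.trans ht't'', insert k K, by rw [Finset.card_insert_of_notMem hkK,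
      hKcard], fun j hj => ?_⟩
    rcases Finset.mem_insert.1 hj with rfl | hj
    · exact ⟨htt'.length_le.trans hk, hkt'', havoid⟩
    obtain ⟨htj, hjt', hjavoid⟩ := hK j hj
    have hget : t''.getD j 0 = t'.getD j 0 := by
      rw [List.getD_eq_getElem _ _ hjt', List.getD_eq_getElem _ _ (hjt'.trans_le ht't''.length_le),
        ht't''.getElem hjt']
    exact ⟨htj, hjt'.trans_le ht't''.length_le, hget ▸ hjavoid⟩

lemma List.Nodup.exists_getD_notMem {t : List ℕ} (ht : t.Nodup) {K D : Finset ℕ}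
    (hK : ∀ k ∈ K, k < t.length) (hcard : 2 * D.card < K.card) :
    ∃ k ∈ K, k ∉ D ∧ t.getD k 0 ∉ D := by
  have hKD : D.card < (K \ D).card := by
    have := Finset.le_card_sdiff D K
    omega
  by_contra! h
  obtain ⟨a, ha, b, hb, hab, heq⟩ := Finset.exists_ne_map_eq_of_card_lt_of_maps_to hKD
    (f := fun k => t.getD k 0) fun k hk => h k (Finset.mem_sdiff.1 hk).1 (Finset.mem_sdiff.1 hk).2
  have hat := hK a (Finset.mem_sdiff.1 ha).1
  have hbt := hK b (Finset.mem_sdiff.1 hb).1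
  simp only [List.getD_eq_getElem _ _ hat, List.getD_eq_getElem _ _ hbt] at heq
  exact hab (ht.getElem_inj_iff.1 heq)

/-- The generic hitting lemma for Zhang's forcing `Z_G`. -/
theorem statement3 (G : Subgroup Perm') (hG : Cofinitary G)
    (T : Set (List ℕ)) (hT : TreePos (G : Set Perm') T)
    (t : List ℕ) (ht : t ∈ T)
    (s : Set (ℕ × ℕ)) (E : Set Word) (hc : ZCond G s E) :
    ∃ s' : Set (ℕ × ℕ), ZCond G s' E ∧ ZLe s' E s E ∧
      ∃ t' ∈ T, t <+: t' ∧
        ∃ k : ℕ, t.length ≤ k ∧ k < t'.length ∧ (k, t'.getD k 0) ∈ s' := by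
  obtain ⟨hsfin, hsinj, hEfin, hEnice⟩ := hc
  set L : Set Perm' := {g | ∃ w ∈ E, Sum.inl g ∈ w}
  have hLG : ∀ g ∈ L, g ∈ G ∧ g ≠ 1 := fun g ⟨w, hw, hg⟩ => (hEnice w hw).mem_of_inl_mem hg
  have hP₀ : insert 1 (L ∪ L⁻¹) ⊆ (G : Set Perm') := by
    rintro f (rfl | hf | hf)
    exacts [G.one_mem, (hLG f hf).1, inv_inv f ▸ G.inv_mem (hLG _ hf).1]
  have hLfin : L.Finite := finite_setOf_inl_mem hEfin
  set D := (finite_setOf_not_freshFor hsfin hLfin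
    fun g hg => hG g (hLG g hg).1 (hLG g hg).2).toFinset
  obtain ⟨t', ht', htt', K, hKcard, hK⟩ :=
    hT.exists_extension_avoiding hP₀ ((hLfin.union hLfin.inv).insert 1) ht (2 * D.card + 1)
  obtain ⟨k, hkK, hk, hm⟩ :=
    (hT.1.2.2 t' ht').exists_getD_notMem (D := D) (fun k hk => (hK k hk).2.1) (by omega)
  simp only [D, Set.Finite.mem_toFinset, Set.mem_ofPred_eq, not_not] at hk hm
  refine ⟨insert (k, t'.getD k 0) s,
    ⟨hsfin.insert _, hsinj.insert (fun h => hk.1 (Or.inl h)) (fun h => hm.1 (Or.inr h)),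
      hEfin, hEnice⟩,
    ⟨Set.subset_insert _ _, subset_rfl, fun w hw => ?_⟩,
    t', ht', htt', k, (hK k hkK).1, (hK k hkK).2.1, Set.mem_insert _ _⟩
  exact wordFix_insert_eq (L := L) (hEnice w hw).isReducedWord (hEnice w hw).exists_eq_append_x
    (fun g hg => ⟨w, hw, hg⟩) hk hm (hK k hkK).2.2

end
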